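/- arXiv:2402.10380 — 6 statements merged into one kernel-verified Lean document; each statement's English description precedes it below -/
import Mathlib

section
/- Let N, M, d, d' be positive natural numbers, let A be an N×N real matrix with all entries nonnegative, let ε be a real number with ε > -1, let W be a d×d' real matrix, let X be an N×d real feature matrix, and let S be a nonempty subset of {1,…,N}. Then for every M×M real matrix Â and every M×d real feature matrix X̂ there exists a vector p̂ ∈ ℝ^d such that z_{A,ε,W}(X') = z_{Â,ε,W}(X̂), where X' is the SUPT-prompted feature matrix obtained from X, S and p̂. (Universal capability of SUPT for a single-layer GIN: a prompt added only on a nonempty subset of nodes can reproduce the embedding of any prompted graph template, including ones with a different number of nodes and a different adjacency matrix, processed by the same pre-trained model.) -/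
open Matrix BigOperators

/-- Single-layer GIN graph embedding with sum readout:
the `j'`-th entry is the sum of the rows of `(A + (1+ε)•I) * X * W`. -/
noncomputable def ginEmbed {N d d' : ℕ} (A : Matrix (Fin N) (Fin N) ℝ) (ε : ℝ)
    (W : Matrix (Fin d) (Fin d') ℝ) (X : Matrix (Fin N) (Fin d) ℝ) : Fin d' → ℝ :=
  fun j' => ∑ i, ((A + (1 + ε) • (1 : Matrix (Fin N) (Fin N) ℝ)) * X * W) i j'

/-- SUPT-prompted feature matrix: add the prompt vector `phat` to the rows indexed by `S`. -/
noncomputable def suptPrompt {N d : ℕ} (X : Matrix (Fin N) (Fin d) ℝ) (S : Finset (Fin N))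
    (phat : Fin d → ℝ) : Matrix (Fin N) (Fin d) ℝ :=
  Matrix.of fun i j => if i ∈ S then X i j + phat j else X i j

/-- GPF-prompted feature matrix: add the prompt vector `p` to every row. -/
noncomputable def gpfPrompt {N d : ℕ} (X : Matrix (Fin N) (Fin d) ℝ)
    (p : Fin d → ℝ) : Matrix (Fin N) (Fin d) ℝ :=
  Matrix.of fun i j => X i j + p j

/-!
The embedding is linear in `X` through the column sums `c` of `A + (1 + ε) • 1`:
`z(X) = (c ᵥ* X) ᵥ* W`. A SUPT prompt `p` shifts `c ᵥ* X` by `(∑ j ∈ S, c j) • p`, and the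
weight `∑ j ∈ S, c j` is positive because every column sum is `∑ i, A i j + (1 + ε) > 0`.
Dividing by it, `p` can move `c ᵥ* X` onto the corresponding vector of any template.
-/

lemma ginEmbed_eq_vecMul {N d d' : ℕ} (A : Matrix (Fin N) (Fin N) ℝ) (ε : ℝ)
    (W : Matrix (Fin d) (Fin d') ℝ) (X : Matrix (Fin N) (Fin d) ℝ) :
    ginEmbed A ε W X =
      ((fun _ => 1) ᵥ* (A + (1 + ε) • (1 : Matrix (Fin N) (Fin N) ℝ))) ᵥ* X ᵥ* W := by
  ext j'
  rw [vecMul_vecMul, vecMul_vecMul, ← Matrix.mul_assoc]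
  simp only [ginEmbed, vecMul, dotProduct, one_mul]

lemma vecMul_suptPrompt {N d : ℕ} (c : Fin N → ℝ) (X : Matrix (Fin N) (Fin d) ℝ)
    (S : Finset (Fin N)) (p : Fin d → ℝ) :
    c ᵥ* suptPrompt X S p = c ᵥ* X + (∑ j ∈ S, c j) • p := by
  ext k
  have hrow : ∀ j, c j * suptPrompt X S p j k = c j * X j k + if j ∈ S then c j * p k else 0 := by
    intro j
    by_cases hj : j ∈ S <;> simp [suptPrompt, hj, mul_add]
  simp only [vecMul, dotProduct, hrow, Finset.sum_add_distrib, Finset.sum_ite_mem,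
    Finset.univ_inter, Pi.add_apply, Pi.smul_apply, smul_eq_mul, Finset.sum_mul]

lemma exists_vecMul_suptPrompt_eq {N d : ℕ} {c : Fin N → ℝ} {S : Finset (Fin N)}
    (hS : ∑ j ∈ S, c j ≠ 0) (X : Matrix (Fin N) (Fin d) ℝ) (v : Fin d → ℝ) :
    ∃ p, c ᵥ* suptPrompt X S p = v :=
  ⟨(∑ j ∈ S, c j)⁻¹ • (v - c ᵥ* X), by
    rw [vecMul_suptPrompt, smul_smul, mul_inv_cancel₀ hS, one_smul, add_sub_cancel]⟩

lemma colSum_add_smul_one_pos {N : ℕ} {A : Matrix (Fin N) (Fin N) ℝ} (hA : ∀ i k, 0 ≤ A i k)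
    {ε : ℝ} (hε : -1 < ε) (j : Fin N) :
    0 < ((fun _ => 1) ᵥ* (A + (1 + ε) • (1 : Matrix (Fin N) (Fin N) ℝ))) j := by
  have hcol : ((fun _ => 1) ᵥ* (A + (1 + ε) • (1 : Matrix (Fin N) (Fin N) ℝ))) j
      = ∑ i, A i j + (1 + ε) := by
    simp [vecMul, dotProduct, Finset.sum_add_distrib, Matrix.one_apply]
  rw [hcol]
  linarith [Finset.sum_nonneg fun i (_ : i ∈ Finset.univ) => hA i j]

theorem supt_universal_capability_general
    (N M d d' : ℕ)
    (A : Matrix (Fin N) (Fin N) ℝ) (hA : ∀ i k, 0 ≤ A i k)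
    (ε : ℝ) (hε : -1 < ε)
    (W : Matrix (Fin d) (Fin d') ℝ)
    (X : Matrix (Fin N) (Fin d) ℝ)
    (S : Finset (Fin N)) (hS : S.Nonempty)
    (Ahat : Matrix (Fin M) (Fin M) ℝ)
    (Xhat : Matrix (Fin M) (Fin d) ℝ) :
    ∃ phat : Fin d → ℝ,
      ginEmbed A ε W (suptPrompt X S phat) = ginEmbed Ahat ε W Xhat := by
  set c := (fun _ => 1) ᵥ* (A + (1 + ε) • (1 : Matrix (Fin N) (Fin N) ℝ))
  have hweight : ∑ j ∈ S, c j ≠ 0 :=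
    (Finset.sum_pos (fun j _ => colSum_add_smul_one_pos hA hε j) hS).ne'
  obtain ⟨p, hp⟩ := exists_vecMul_suptPrompt_eq hweight X
    ((fun _ => 1) ᵥ* (Ahat + (1 + ε) • (1 : Matrix (Fin M) (Fin M) ℝ)) ᵥ* Xhat)
  exact ⟨p, by rw [ginEmbed_eq_vecMul, ginEmbed_eq_vecMul, hp]⟩

/-- Universal capability of SUPT (single-layer GIN): a prompt added only on a nonempty
subset of nodes can reproduce the embedding of any prompted graph template, including
ones with a different number of nodes and a different adjacency matrix. -/
theorem supt_universal_capability
    (N M d d' : ℕ) (hN : 0 < N) (hM : 0 < M) (hd : 0 < d) (hd' : 0 < d')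
    (A : Matrix (Fin N) (Fin N) ℝ) (hA : ∀ i k, 0 ≤ A i k)
    (ε : ℝ) (hε : -1 < ε)
    (W : Matrix (Fin d) (Fin d') ℝ)
    (X : Matrix (Fin N) (Fin d) ℝ)
    (S : Finset (Fin N)) (hS : S.Nonempty)
    (Ahat : Matrix (Fin M) (Fin M) ℝ)
    (Xhat : Matrix (Fin M) (Fin d) ℝ) :
    ∃ phat : Fin d → ℝ,
      ginEmbed A ε W (suptPrompt X S phat) = ginEmbed Ahat ε W Xhat :=
  supt_universal_capability_general N M d d' A hA ε hε W X S hS Ahat Xhat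
end

section
/- Let N, d, d' be positive natural numbers, let A be an N×N real matrix with all entries nonnegative, let ε be a real number with ε > -1, let W be a d×d' real matrix, let X be an N×d real feature matrix, and let S be a nonempty subset of {1,…,N}. Then for every vector p ∈ ℝ^d there exists a vector p̂ ∈ ℝ^d such that z_{A,ε,W}(X') = z_{A,ε,W}(X + 1·pᵀ), where X' is the SUPT-prompted feature matrix obtained from X, S and p̂, and X + 1·pᵀ is the GPF-prompted feature matrix that adds p to every row of X. (SUPT on a nonempty node subset can exactly reproduce the embedding produced by a uniform GPF prompt added to all nodes.) -/
open Matrix BigOperators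

/-- SUPT on a nonempty node subset can exactly reproduce the embedding produced by a
uniform GPF prompt added to all nodes. -/
theorem supt_reproduces_gpf
    (N d d' : ℕ) (hN : 0 < N) (hd : 0 < d) (hd' : 0 < d')
    (A : Matrix (Fin N) (Fin N) ℝ) (hA : ∀ i k, 0 ≤ A i k)
    (ε : ℝ) (hε : -1 < ε)
    (W : Matrix (Fin d) (Fin d') ℝ)
    (X : Matrix (Fin N) (Fin d) ℝ)
    (S : Finset (Fin N)) (hS : S.Nonempty)
    (p : Fin d → ℝ) :
    ∃ phat : Fin d → ℝ,
      ginEmbed A ε W (suptPrompt X S phat) = ginEmbed A ε W (gpfPrompt X p) := by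
  set M : Matrix (Fin N) (Fin N) ℝ := A + (1 + ε) • (1 : Matrix (Fin N) (Fin N) ℝ) with hM
  set α : ℝ := ∑ k ∈ S, ∑ i, M i k with hα
  set β : ℝ := ∑ k, ∑ i, M i k with hβ
  have hcol : ∀ k, 0 < ∑ i, M i k := by
    intro k
    have h1 : ∑ i, M i k = (∑ i, A i k) + (1 + ε) := by
      simp [hM, Matrix.add_apply, Matrix.smul_apply, Matrix.one_apply,
        Finset.sum_add_distrib, Finset.sum_ite_eq, mul_ite]
    have h2 : 0 ≤ ∑ i, A i k := Finset.sum_nonneg fun i _ => hA i k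
    rw [h1]; linarith
  have hαpos : 0 < α := Finset.sum_pos (fun k _ => hcol k) hS
  refine ⟨(β / α) • p, ?_⟩
  funext j'
  show ∑ i, (M * suptPrompt X S ((β / α) • p) * W) i j'
      = ∑ i, (M * gpfPrompt X p * W) i j'
  have key : ∀ j, (∑ i, ∑ k, M i k * (suptPrompt X S ((β / α) • p)) k j)
      = ∑ i, ∑ k, M i k * (gpfPrompt X p) k j := by
    intro j
    have hL : (∑ i, ∑ k, M i k * (suptPrompt X S ((β / α) • p)) k j)
        = (∑ i, ∑ k, M i k * X k j) + α * ((β / α) * p j) := by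
      have swap1 : (∑ i, ∑ k, M i k * (suptPrompt X S ((β / α) • p)) k j)
          = ∑ k, ∑ i, M i k * (suptPrompt X S ((β / α) • p)) k j := Finset.sum_comm
      have swap2 : (∑ i, ∑ k, M i k * X k j)
          = ∑ k, ∑ i, M i k * X k j := Finset.sum_comm
      have step : ∀ k, (∑ i, M i k * (suptPrompt X S ((β / α) • p)) k j)
          = (∑ i, M i k * X k j)
            + (if k ∈ S then (∑ i, M i k) * ((β / α) * p j) else 0) := by
        intro k
        by_cases hk : k ∈ S <;>
          simp [suptPrompt, hk, mul_add, Finset.sum_add_distrib, Finset.sum_mul]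
      rw [swap1, swap2, Finset.sum_congr rfl (fun k _ => step k),
        Finset.sum_add_distrib, Finset.sum_ite_mem, Finset.univ_inter,
        ← Finset.sum_mul, ← hα]
    have hR : (∑ i, ∑ k, M i k * (gpfPrompt X p) k j)
        = (∑ i, ∑ k, M i k * X k j) + β * p j := by
      have swapβ : β = ∑ i, ∑ k, M i k := by rw [hβ]; exact Finset.sum_comm
      simp only [gpfPrompt, Matrix.of_apply, mul_add, Finset.sum_add_distrib]
      rw [swapβ, Finset.sum_mul]
      congr 1
      exact Finset.sum_congr rfl fun i _ => (Finset.sum_mul _ _ _).symm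
    rw [hL, hR]
    have : α * ((β / α) * p j) = β * p j := by
      field_simp
    rw [this]
  calc ∑ i, (M * suptPrompt X S ((β / α) • p) * W) i j'
      = ∑ j, (∑ i, ∑ k, M i k * (suptPrompt X S ((β / α) • p)) k j) * W j j' := by
        simp only [Matrix.mul_apply]
        rw [Finset.sum_comm]
        exact Finset.sum_congr rfl fun j _ => by rw [Finset.sum_mul]
    _ = ∑ j, (∑ i, ∑ k, M i k * (gpfPrompt X p) k j) * W j j' := by
        exact Finset.sum_congr rfl fun j _ => by rw [key j]
    _ = ∑ i, (M * gpfPrompt X p * W) i j' := by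
        simp only [Matrix.mul_apply]
        rw [Finset.sum_comm]
        exact Finset.sum_congr rfl fun j _ => by rw [Finset.sum_mul]
end

section
/- Let N, d, d' be positive natural numbers, let A be an N×N real matrix with all entries nonnegative, let ε be a real number with ε > -1, let W be a d×d' real matrix, let X be an N×d real feature matrix, and let S be a nonempty subset of {1,…,N}. Then for every N×d real matrix P (a node-wise prompt matrix, as produced by GPF-plus) there exists a vector p̂ ∈ ℝ^d such that z_{A,ε,W}(X') = z_{A,ε,W}(X + P), where X' is the SUPT-prompted feature matrix obtained from X, S and p̂. (A single SUPT prompt vector applied only on a nonempty subset of nodes can reproduce the embedding produced by any node-specific prompt matrix added to all nodes.) -/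
open Matrix BigOperators

/-- A single SUPT prompt vector applied only on a nonempty subset of nodes can reproduce
the embedding produced by any node-specific prompt matrix (GPF-plus) added to all nodes. -/
theorem supt_reproduces_gpf_plus
    (N d d' : ℕ) (hN : 0 < N) (hd : 0 < d) (hd' : 0 < d')
    (A : Matrix (Fin N) (Fin N) ℝ) (hA : ∀ i k, 0 ≤ A i k)
    (ε : ℝ) (hε : -1 < ε)
    (W : Matrix (Fin d) (Fin d') ℝ)
    (X : Matrix (Fin N) (Fin d) ℝ)
    (S : Finset (Fin N)) (hS : S.Nonempty)
    (P : Matrix (Fin N) (Fin d) ℝ) :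
    ∃ phat : Fin d → ℝ,
      ginEmbed A ε W (suptPrompt X S phat) = ginEmbed A ε W (X + P) := by
  set B := A + (1 + ε) • (1 : Matrix (Fin N) (Fin N) ℝ) with hB
  set c : Fin N → ℝ := fun k => ∑ i, B i k with hc
  have hcpos : ∀ k, 0 < c k := by
    intro k
    have hck : c k = (∑ i, A i k) + (1 + ε) := by
      simp [hc, hB, Matrix.add_apply, Matrix.smul_apply, Matrix.one_apply,
        Finset.sum_add_distrib]
    rw [hck]
    have h1 : 0 ≤ ∑ i, A i k := Finset.sum_nonneg fun i _ => hA i k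
    linarith
  set D := ∑ k ∈ S, c k with hD
  have hDpos : 0 < D := Finset.sum_pos (fun k _ => hcpos k) hS
  refine ⟨fun j => (∑ k, c k * P k j) / D, ?_⟩
  funext j'
  have key : ∀ Y : Matrix (Fin N) (Fin d) ℝ,
      ginEmbed A ε W Y j' = ∑ j, (∑ k, c k * Y k j) * W j j' := by
    intro Y
    simp only [ginEmbed, Matrix.mul_apply, ← hB]
    rw [Finset.sum_comm]
    refine Finset.sum_congr rfl fun j _ => ?_
    rw [← Finset.sum_mul]
    congr 1
    rw [Finset.sum_comm]
    refine Finset.sum_congr rfl fun k _ => ?_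
    rw [← Finset.sum_mul, hc]
  rw [key, key]
  refine Finset.sum_congr rfl fun j _ => ?_
  congr 1
  have hsupt : ∀ k, c k * suptPrompt X S (fun j => (∑ k, c k * P k j) / D) k j
      = c k * X k j + (if k ∈ S then c k * ((∑ k, c k * P k j) / D) else 0) := by
    intro k
    simp only [suptPrompt, Matrix.of_apply]
    split <;> ring
  simp only [hsupt, Finset.sum_add_distrib, Finset.sum_ite_mem,
    Finset.univ_inter, Matrix.add_apply]
  rw [← Finset.sum_mul, ← hD]
  rw [mul_comm D, div_mul_cancel₀ _ (ne_of_gt hDpos)]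
  rw [← Finset.sum_add_distrib]
  refine Finset.sum_congr rfl fun k _ => ?_
  ring
end

section
/- Let N, d, d' be positive natural numbers, let A be an N×N real matrix, let ε be a real number, let W be a d×d' real matrix, let X be an N×d real feature matrix, let S be a subset of {1,…,N}, and let p̂ ∈ ℝ^d. Then for every j' ∈ {1,…,d'}, z_{A,ε,W}(X')_{j'} = z_{A,ε,W}(X)_{j'} + s_S · ∑_{j=1}^{d} p̂_j · W_{j,j'}, where X' is the SUPT-prompted feature matrix obtained from X, S and p̂, and s_S := ∑_{k ∈ S} ((∑_{i=1}^{N} A_{i,k}) + 1 + ε) is the sum over the selected nodes of (column sum of A at that node) + 1 + ε. (The increment of the sum-pooled single-layer GIN embedding caused by a subgraph-level prompt equals the scalar s_S times p̂·W.) -/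
open Matrix BigOperators

/-- The increment of the sum-pooled single-layer GIN embedding caused by a subgraph-level
prompt equals the scalar $s_S$ times $phat·W$, where
$s_S = ∑_{k ∈ S} ((∑_i A_{i,k}) + 1 + ε)$. -/
theorem supt_embedding_increment
    (N d d' : ℕ) (hN : 0 < N) (hd : 0 < d) (hd' : 0 < d')
    (A : Matrix (Fin N) (Fin N) ℝ)
    (ε : ℝ)
    (W : Matrix (Fin d) (Fin d') ℝ)
    (X : Matrix (Fin N) (Fin d) ℝ)
    (S : Finset (Fin N))
    (phat : Fin d → ℝ) :
    ∀ j' : Fin d',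
      ginEmbed A ε W (suptPrompt X S phat) j'
        = ginEmbed A ε W X j'
          + (∑ k ∈ S, ((∑ i, A i k) + 1 + ε)) * ∑ j, phat j * W j j' := by
  intro j'
  have hX : suptPrompt X S phat
      = X + Matrix.of (fun i j => if i ∈ S then phat j else 0) := by
    ext i j
    simp only [suptPrompt, Matrix.of_apply, Matrix.add_apply]
    split <;> simp
  set M := A + (1 + ε) • (1 : Matrix (Fin N) (Fin N) ℝ) with hM
  set D : Matrix (Fin N) (Fin d) ℝ := Matrix.of (fun i j => if i ∈ S then phat j else 0)
  have key : ∑ i, (M * D * W) i j' = (∑ k ∈ S, ((∑ i, A i k) + 1 + ε)) * ∑ j, phat j * W j j' := by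
    simp only [Matrix.mul_apply]
    rw [Finset.sum_comm]
    have : ∀ j, ∑ i, (∑ k, M i k * D k j) * W j j'
        = (∑ k ∈ S, ((∑ i, A i k) + 1 + ε)) * (phat j * W j j') := by
      intro j
      rw [← Finset.sum_mul]
      rw [Finset.sum_comm]
      have hD : ∀ k, ∑ i, M i k * D k j = (∑ i, M i k) * D k j := by
        intro k; rw [Finset.sum_mul]
      simp only [hD]
      have hMk : ∀ k, ∑ i, M i k = (∑ i, A i k) + (1 + ε) := by
        intro k
        simp [hM, Matrix.add_apply, Matrix.smul_apply, Matrix.one_apply,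
          Finset.sum_add_distrib, Finset.sum_ite_eq, mul_ite]
      simp only [hMk, D, Matrix.of_apply, mul_ite, mul_zero]
      rw [Finset.sum_ite_mem, Finset.univ_inter, ← Finset.sum_mul]
      have hadd : ∀ k : Fin N, (∑ i, A i k) + (1 + ε) = (∑ i, A i k) + 1 + ε := by
        intro k; ring
      simp only [hadd]
      ring
    simp only [this]
    rw [← Finset.mul_sum]
  rw [hX]
  simp only [ginEmbed, ← hM, Matrix.mul_add, Matrix.add_mul, Matrix.add_apply,
    Finset.sum_add_distrib, key]
end

section
/- Let N, d, d' be positive natural numbers, let A be an N×N real matrix, let ε be a real number, let W be a d×d' real matrix, let X be an N×d real feature matrix, let S be a subset of {1,…,N}, and let p ∈ ℝ^d. Set D := ∑_{i,k} A_{i,k} and s_S := ∑_{k ∈ S} ((∑_{i=1}^{N} A_{i,k}) + 1 + ε). If s_S ≠ 0, then the explicit prompt vector p̂ := ((D + N·(1+ε))/s_S) · p satisfies z_{A,ε,W}(X') = z_{A,ε,W}(X + 1·pᵀ), where X' is the SUPT-prompted feature matrix obtained from X, S and p̂, and X + 1·pᵀ is the GPF-prompted feature matrix that adds p to every row of X.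 (An explicit rescaling of the uniform prompt, applied only on the selected nodes, reproduces the GPF-prompted embedding.) -/
open Matrix BigOperators

/-- An explicit rescaling of the uniform prompt, applied only on the selected nodes,
reproduces the GPF-prompted embedding, provided the scalar coefficient $s_S$ is nonzero. -/
theorem supt_explicit_prompt_matches_gpf
    (N d d' : ℕ) (hN : 0 < N) (hd : 0 < d) (hd' : 0 < d')
    (A : Matrix (Fin N) (Fin N) ℝ)
    (ε : ℝ)
    (W : Matrix (Fin d) (Fin d') ℝ)
    (X : Matrix (Fin N) (Fin d) ℝ)
    (S : Finset (Fin N))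
    (p : Fin d → ℝ)
    (hs : (∑ k ∈ S, ((∑ i, A i k) + 1 + ε)) ≠ 0) :
    ginEmbed A ε W
        (suptPrompt X S
          ((((∑ i, ∑ k, A i k) + (N : ℝ) * (1 + ε)) /
              (∑ k ∈ S, ((∑ i, A i k) + 1 + ε))) • p))
      = ginEmbed A ε W (gpfPrompt X p) := by
  classical
  funext j'
  set B := A + (1 + ε) • (1 : Matrix (Fin N) (Fin N) ℝ) with hB
  have hc : ∀ k, (∑ i, B i k) = (∑ i, A i k) + (1 + ε) := by
    intro k
    simp [hB, Matrix.add_apply, Matrix.smul_apply, Matrix.one_apply,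
      Finset.sum_add_distrib, Finset.sum_ite_eq']
  have key : ∀ Y : Matrix (Fin N) (Fin d) ℝ,
      ginEmbed A ε W Y j' = ∑ k, (∑ i, B i k) * (∑ j, Y k j * W j j') := by
    intro Y
    have h1 : ginEmbed A ε W Y j' = ∑ i, ∑ k, ∑ j, B i k * Y k j * W j j' := by
      simp only [ginEmbed, ← hB, Matrix.mul_apply, Finset.sum_mul]
      refine Finset.sum_congr rfl fun i _ => ?_
      rw [Finset.sum_comm]
    have h2 : (∑ k, (∑ i, B i k) * (∑ j, Y k j * W j j'))
        = ∑ k, ∑ i, ∑ j, B i k * Y k j * W j j' := by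
      refine Finset.sum_congr rfl fun k _ => ?_
      rw [Finset.sum_mul]
      refine Finset.sum_congr rfl fun i _ => ?_
      rw [Finset.mul_sum]
      refine Finset.sum_congr rfl fun j _ => ?_
      ring
    rw [h1, Finset.sum_comm]
    exact h2.symm
  rw [key, key]
  obtain ⟨c, hcdef⟩ : ∃ c : ℝ, c = (((∑ i, ∑ k, A i k) + (N : ℝ) * (1 + ε)) /
      (∑ k ∈ S, ((∑ i, A i k) + 1 + ε))) := ⟨_, rfl⟩
  rw [← hcdef]
  simp only [suptPrompt, gpfPrompt, Matrix.of_apply, Pi.smul_apply, smul_eq_mul]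
  have lhs_split :
      (∑ k, (∑ i, B i k) * (∑ j, (if k ∈ S then X k j + c * p j else X k j) * W j j'))
      = (∑ k, (∑ i, B i k) * (∑ j, X k j * W j j'))
        + (∑ k ∈ S, (∑ i, B i k)) * c * (∑ j, p j * W j j') := by
    rw [← Finset.sum_filter_add_sum_filter_not Finset.univ (· ∈ S)
      (fun k => (∑ i, B i k) * (∑ j, X k j * W j j')),
      ← Finset.sum_filter_add_sum_filter_not Finset.univ (· ∈ S)
      (fun k => (∑ i, B i k) * (∑ j, (if k ∈ S then X k j + c * p j else X k j) * W j j'))]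
    have h1 : ∀ k ∈ Finset.univ.filter (· ∈ S),
        (∑ i, B i k) * (∑ j, (if k ∈ S then X k j + c * p j else X k j) * W j j')
        = (∑ i, B i k) * (∑ j, X k j * W j j')
          + (∑ i, B i k) * c * (∑ j, p j * W j j') := by
      intro k hk
      simp only [Finset.mem_filter] at hk
      simp only [if_pos hk.2, add_mul, Finset.sum_add_distrib, mul_add]
      congr 1
      have hh : (∑ j, c * p j * W j j') = c * ∑ j, p j * W j j' := by
        rw [Finset.mul_sum]
        exact Finset.sum_congr rfl fun j _ => by ring
      rw [hh, ← mul_assoc]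
    have h2 : ∀ k ∈ Finset.univ.filter (¬ · ∈ S),
        (∑ i, B i k) * (∑ j, (if k ∈ S then X k j + c * p j else X k j) * W j j')
        = (∑ i, B i k) * (∑ j, X k j * W j j') := by
      intro k hk
      simp only [Finset.mem_filter] at hk
      simp [if_neg hk.2]
    rw [Finset.sum_congr rfl h1, Finset.sum_congr rfl h2, Finset.sum_add_distrib]
    simp only [Finset.filter_mem_eq_inter, Finset.univ_inter]
    rw [← Finset.sum_mul, ← Finset.sum_mul]
    ring
  have rhs_split :
      (∑ k, (∑ i, B i k) * (∑ j, (X k j + p j) * W j j'))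
      = (∑ k, (∑ i, B i k) * (∑ j, X k j * W j j'))
        + (∑ k, (∑ i, B i k)) * (∑ j, p j * W j j') := by
    simp only [add_mul, Finset.sum_add_distrib, mul_add, Finset.mul_sum]
    congr 1
    rw [Finset.sum_comm]
    refine Finset.sum_congr rfl fun j _ => ?_
    rw [← Finset.sum_mul]
  rw [lhs_split, rhs_split]
  congr 1
  have hsum : (∑ k ∈ S, (∑ i, B i k)) = ∑ k ∈ S, ((∑ i, A i k) + 1 + ε) := by
    refine Finset.sum_congr rfl fun k _ => ?_
    rw [hc k]; ring
  have htot : (∑ k, (∑ i, B i k)) = (∑ i, ∑ k, A i k) + (N : ℝ) * (1 + ε) := by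
    simp only [hc]
    rw [Finset.sum_add_distrib, Finset.sum_comm]
    simp only [Finset.sum_const, Finset.card_univ, Fintype.card_fin, nsmul_eq_mul]
  rw [hsum, htot, hcdef]
  congr 1
  rw [mul_comm]
  exact div_mul_cancel₀ _ hs
end

section
/- Let N, d, d' be positive natural numbers, let A be an N×N real matrix with all entries nonnegative, let ε be a real number with ε > -1, let W be a d×d' real matrix such that the linear map v ↦ vᵀ·W from ℝ^d to ℝ^{d'} is surjective, let X be an N×d real feature matrix, and let S be a nonempty subset of {1,…,N}. Then for every target vector ẑ ∈ ℝ^{d'} there exists a vector p̂ ∈ ℝ^d such that z_{A,ε,W}(X') = ẑ, where X' is the SUPT-prompted feature matrix obtained from X, S and p̂. (When the weight matrix has full row-reachable range, a subgraph-level prompt on any nonempty node subset can drive the sum-pooled single-layer GIN embedding to an arbitrary target, hence can match the output of any prompting function.) -/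
open Matrix BigOperators

/-!
The embedding is affine in the features, and adding `p̂` to the rows in `S` is adding the rank-one
matrix `𝟙_S p̂ᵀ`. Hence the prompted embedding is `z(X) + c • (p̂ᵀ W)`, where `c` is the total weight
of the columns of `A + (1 + ε) I` indexed by `S`. Every such column has weight
`∑ᵢ Aᵢₖ + 1 + ε > 0`, so `c > 0`, and surjectivity of `v ↦ vᵀ W` gives `p̂` with
`p̂ᵀ W = c⁻¹ • (ẑ - z(X))`.
-/

section GinEmbed

variable {N d d' : ℕ} (A : Matrix (Fin N) (Fin N) ℝ) (ε : ℝ) (W : Matrix (Fin d) (Fin d') ℝ)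

theorem ginEmbed_eq_one_vecMul (X : Matrix (Fin N) (Fin d) ℝ) :
    ginEmbed A ε W X = 1 ᵥ* ((A + (1 + ε) • 1) * X * W) := by
  ext j
  simp [ginEmbed, vecMul, dotProduct]

theorem ginEmbed_add (X Y : Matrix (Fin N) (Fin d) ℝ) :
    ginEmbed A ε W (X + Y) = ginEmbed A ε W X + ginEmbed A ε W Y := by
  simp only [ginEmbed_eq_one_vecMul, Matrix.mul_add, Matrix.add_mul, vecMul_add]

theorem ginEmbed_vecMulVec (u : Fin N → ℝ) (p : Fin d → ℝ) :
    ginEmbed A ε W (vecMulVec u p) = (1 ⬝ᵥ (A + (1 + ε) • 1) *ᵥ u) • (p ᵥ* W) := by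
  rw [ginEmbed_eq_one_vecMul, mul_vecMulVec, vecMulVec_mul, vecMul_vecMulVec]

end GinEmbed

theorem one_vecMul_add_smul_one_pos {n : Type*} [Fintype n] [DecidableEq n]
    {A : Matrix n n ℝ} (hA : ∀ i k, 0 ≤ A i k) {ε : ℝ} (hε : -1 < ε) (k : n) :
    0 < (1 ᵥ* (A + (1 + ε) • 1)) k := by
  have hcol : (1 ᵥ* (A + (1 + ε) • 1)) k = ∑ i, A i k + (1 + ε) := by
    simp [vecMul, dotProduct, Finset.sum_add_distrib, one_apply]
  have hA_col : 0 ≤ ∑ i, A i k := Finset.sum_nonneg fun i _ => hA i k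
  rw [hcol]
  linarith

theorem suptPrompt_eq_add_vecMulVec {N d : ℕ} (X : Matrix (Fin N) (Fin d) ℝ)
    (S : Finset (Fin N)) (p : Fin d → ℝ) :
    suptPrompt X S p = X + vecMulVec (fun i => if i ∈ S then 1 else 0) p := by
  ext i j
  by_cases hi : i ∈ S <;> simp [suptPrompt, vecMulVec_apply, hi]

theorem dotProduct_indicator_pos {n : Type*} [Fintype n] [DecidableEq n] {w : n → ℝ}
    (hw : ∀ k, 0 < w k) {S : Finset n} (hS : S.Nonempty) :
    0 < w ⬝ᵥ fun i => if i ∈ S then 1 else 0 := by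
  simp only [dotProduct, mul_ite, mul_one, mul_zero, Finset.sum_ite_mem, Finset.univ_inter]
  exact Finset.sum_pos (fun k _ => hw k) hS

theorem supt_hits_any_target_general
    (N d d' : ℕ)
    (A : Matrix (Fin N) (Fin N) ℝ) (hA : ∀ i k, 0 ≤ A i k)
    (ε : ℝ) (hε : -1 < ε)
    (W : Matrix (Fin d) (Fin d') ℝ)
    (hW : Function.Surjective (fun v : Fin d → ℝ => v ᵥ* W))
    (X : Matrix (Fin N) (Fin d) ℝ)
    (S : Finset (Fin N)) (hS : S.Nonempty) :
    ∀ zhat : Fin d' → ℝ, ∃ phat : Fin d → ℝ,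
      ginEmbed A ε W (suptPrompt X S phat) = zhat := by
  intro zhat
  set u : Fin N → ℝ := fun i => if i ∈ S then 1 else 0
  have hc : 0 < 1 ⬝ᵥ (A + (1 + ε) • 1) *ᵥ u := by
    rw [dotProduct_mulVec]
    exact dotProduct_indicator_pos (one_vecMul_add_smul_one_pos hA hε) hS
  obtain ⟨p, hp : p ᵥ* W = _⟩ :=
    hW ((1 ⬝ᵥ (A + (1 + ε) • 1) *ᵥ u)⁻¹ • (zhat - ginEmbed A ε W X))
  refine ⟨p, ?_⟩
  rw [suptPrompt_eq_add_vecMulVec, ginEmbed_add, ginEmbed_vecMulVec, hp, smul_smul,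
    mul_inv_cancel₀ hc.ne', one_smul, add_sub_cancel]

/-- When the linear map $v ↦ vᵀW$ is surjective, a subgraph-level prompt on any nonempty
node subset can drive the sum-pooled single-layer GIN embedding to an arbitrary target. -/
theorem supt_hits_any_target
    (N d d' : ℕ) (hN : 0 < N) (hd : 0 < d) (hd' : 0 < d')
    (A : Matrix (Fin N) (Fin N) ℝ) (hA : ∀ i k, 0 ≤ A i k)
    (ε : ℝ) (hε : -1 < ε)
    (W : Matrix (Fin d) (Fin d') ℝ)
    (hW : Function.Surjective (fun v : Fin d → ℝ => v ᵥ* W))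
    (X : Matrix (Fin N) (Fin d) ℝ)
    (S : Finset (Fin N)) (hS : S.Nonempty) :
    ∀ zhat : Fin d' → ℝ, ∃ phat : Fin d → ℝ,
      ginEmbed A ε W (suptPrompt X S phat) = zhat :=
  supt_hits_any_target_general N d d' A hA ε hε W hW X S hS
end
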